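/- Let U ⊆ ℝ² be a nonempty open set and Γ : U → (ℝ² →ₗ[ℝ] ℝ² →ₗ[ℝ] ℝ²) a smooth symmetric Christoffel map whose Ricci tensor R_{ab} is symmetric. Define a connection D on the trivial rank-3 bundle U × (ℝ² × ℝ) by D_a(X, ρ) = (∇_aX^b − δ_a{}^b ρ, ∂_aρ + R_{ab}X^b), where ∇_aX^b = ∂_aX^b + Γ_{ac}{}^bX^c. Then for every smooth section s = (X, ρ) : U → ℝ² × ℝ, the curvature of D is given by (D_aD_b − D_bD_a)(X, ρ) = (0, Y_{abc}X^c), where Y_{abc} := ∇_aR_{bc} − ∇_bR_{ac} and ∇_aR_{bc} = ∂_aR_{bc} − Γ_{ab}{}^dR_{dc} − Γ_{ac}{}^dR_{bd}. (When forming D_aD_b, the first index of D_bs is differentiated covariantly using Γ.) -/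

import Mathlib

noncomputable section

/-- The plane ℝ², as `Fin 2 → ℝ`. -/
abbrev E2 : Type := Fin 2 → ℝ

/-- The standard basis vectors of ℝ². -/
def bas (a : Fin 2) : E2 := Pi.single a 1

/-- Partial derivative ∂ₐ of a scalar function on ℝ². -/
def pd (a : Fin 2) (f : E2 → ℝ) (x : E2) : ℝ := fderiv ℝ f x (bas a)

/-- Components Γ_{ab}{}^c of a Christoffel map Γ : ℝ² → (ℝ² →ₗ ℝ² →ₗ ℝ²). -/
def chr (Γ : E2 → (E2 →ₗ[ℝ] E2 →ₗ[ℝ] E2)) (a b c : Fin 2) (x : E2) : ℝ :=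
  Γ x (bas a) (bas b) c

/-- Ricci tensor components built from Christoffel components `Γc a b c` (= Γ_{ab}{}^c):
`R_{ad} = ∂_cΓ_{ad}{}^c − ∂_aΓ_{cd}{}^c + Γ_{cb}{}^cΓ_{ad}{}^b − Γ_{ab}{}^cΓ_{cd}{}^b`. -/
def ricciC (Γc : Fin 2 → Fin 2 → Fin 2 → E2 → ℝ) (a d : Fin 2) (x : E2) : ℝ :=
  (∑ c, pd c (Γc a d c) x) - (∑ c, pd a (Γc c d c) x)
  + (∑ b, ∑ c, Γc c b c x * Γc a d b x)
  - (∑ b, ∑ c, Γc a b c x * Γc c d b x)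

/-- Covariant derivative of the Ricci tensor:
`∇_aR_{bc} = ∂_aR_{bc} − Γ_{ab}{}^dR_{dc} − Γ_{ac}{}^dR_{bd}`. -/
def covRicciC (Γc : Fin 2 → Fin 2 → Fin 2 → E2 → ℝ) (a b c : Fin 2) (x : E2) : ℝ :=
  pd a (ricciC Γc b c) x - (∑ d, Γc a b d x * ricciC Γc d c x)
    - (∑ d, Γc a c d x * ricciC Γc b d x)

/-- `Y_{abc} = ∇_aR_{bc} − ∇_bR_{ac}`. -/
def YC (Γc : Fin 2 → Fin 2 → Fin 2 → E2 → ℝ) (a b c : Fin 2) (x : E2) : ℝ :=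
  covRicciC Γc a b c x - covRicciC Γc b a c x

/-- Covariant derivative of a vector field: `∇_aX^c = ∂_aX^c + Γ_{ab}{}^cX^b`. -/
def covV (Γc : Fin 2 → Fin 2 → Fin 2 → E2 → ℝ) (X : E2 → E2) (a c : Fin 2) (x : E2) : ℝ :=
  pd a (fun y => X y c) x + ∑ b, Γc a b c x * X x b

/-- Vector part of the tractor connection `D` on the trivial rank-3 bundle:
`(D_a(X,ρ))^b = ∇_aX^b − δ_a{}^b ρ`. -/
def Dvec (Γc : Fin 2 → Fin 2 → Fin 2 → E2 → ℝ) (X : E2 → E2) (ρ : E2 → ℝ)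
    (a b : Fin 2) (x : E2) : ℝ :=
  covV Γc X a b x - (if a = b then ρ x else 0)

/-- Scalar part of the tractor connection `D`: `∂_aρ + R_{ab}X^b`. -/
def Dsc (Γc : Fin 2 → Fin 2 → Fin 2 → E2 → ℝ) (X : E2 → E2) (ρ : E2 → ℝ)
    (a : Fin 2) (x : E2) : ℝ :=
  pd a ρ x + ∑ b, ricciC Γc a b x * X x b

/-- Vector part of `D_a D_b (X,ρ)`: the free 1-form index `b` of `D s` is differentiated
covariantly using `Γ`. -/
def DDvec (Γc : Fin 2 → Fin 2 → Fin 2 → E2 → ℝ) (X : E2 → E2) (ρ : E2 → ℝ)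
    (a b c : Fin 2) (x : E2) : ℝ :=
  pd a (fun y => Dvec Γc X ρ b c y) x + (∑ d, Γc a d c x * Dvec Γc X ρ b d x)
    - (∑ d, Γc a b d x * Dvec Γc X ρ d c x) - (if a = c then Dsc Γc X ρ b x else 0)

/-- Scalar part of `D_a D_b (X,ρ)`. -/
def DDsc (Γc : Fin 2 → Fin 2 → Fin 2 → E2 → ℝ) (X : E2 → E2) (ρ : E2 → ℝ)
    (a b : Fin 2) (x : E2) : ℝ :=
  pd a (fun y => Dsc Γc X ρ b y) x - (∑ d, Γc a b d x * Dsc Γc X ρ d x)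
    + ∑ d, ricciC Γc a d x * Dvec Γc X ρ b d x


section Aux

lemma contDiffOn_pd {f : E2 → ℝ} {U : Set E2} (hU : IsOpen U)
    (hf : ContDiffOn ℝ (⊤ : ℕ∞) f U) (a : Fin 2) : ContDiffOn ℝ (⊤ : ℕ∞) (pd a f) U := by
  have h1 : ContDiffOn ℝ (⊤ : ℕ∞) (fun x => fderiv ℝ f x) U :=
    hf.fderiv_of_isOpen hU (by simp)
  exact h1.clm_apply contDiffOn_const

lemma ContDiffOn.diffAt {f : E2 → ℝ} {U : Set E2} (hU : IsOpen U) {x : E2} (hx : x ∈ U)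
    (hf : ContDiffOn ℝ (⊤ : ℕ∞) f U) : DifferentiableAt ℝ f x :=
  (hf.contDiffAt (hU.mem_nhds hx)).differentiableAt (by simp)

lemma pd_comm {f : E2 → ℝ} {U : Set E2} (hU : IsOpen U) {x : E2} (hx : x ∈ U)
    (hf : ContDiffOn ℝ (⊤ : ℕ∞) f U) (a b : Fin 2) :
    pd a (pd b f) x = pd b (pd a f) x := by
  have hfa : ContDiffAt ℝ (⊤ : ℕ∞) f x := hf.contDiffAt (hU.mem_nhds hx)
  have hsymm := (hfa.of_le (WithTop.coe_le_coe.mpr le_top) : ContDiffAt ℝ 2 f x).isSymmSndFDerivAt (by simp)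
  have hd : DifferentiableAt ℝ (fun y => fderiv ℝ f y) x :=
    (hfa.fderiv_right (m := 1) (WithTop.coe_le_coe.mpr le_top)).differentiableAt one_ne_zero
  have h1 : ∀ v w : Fin 2, pd v (pd w f) x = fderiv ℝ (fderiv ℝ f) x (bas v) (bas w) := by
    intro v w
    show fderiv ℝ (fun y => (fderiv ℝ f y) (bas w)) x (bas v) = _
    rw [fderiv_clm_apply hd (differentiableAt_const (bas w))]
    simp
  rw [h1, h1]
  exact hsymm (bas a) (bas b)

lemma pd_expand1 {p q0 q1 r0 r1 s : E2 → ℝ} {x : E2}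
    (hp : DifferentiableAt ℝ p x) (hq0 : DifferentiableAt ℝ q0 x)
    (hq1 : DifferentiableAt ℝ q1 x) (hr0 : DifferentiableAt ℝ r0 x)
    (hr1 : DifferentiableAt ℝ r1 x) (hs : DifferentiableAt ℝ s x) (a : Fin 2) :
    pd a (fun y => p y + (q0 y * r0 y + q1 y * r1 y) - s y) x
      = pd a p x + (pd a q0 x * r0 x + q0 x * pd a r0 x
          + (pd a q1 x * r1 x + q1 x * pd a r1 x)) - pd a s x := by
  have H := ((hp.hasFDerivAt.add ((hq0.hasFDerivAt.mul hr0.hasFDerivAt).add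
      (hq1.hasFDerivAt.mul hr1.hasFDerivAt))).sub hs.hasFDerivAt).fderiv
  change fderiv ℝ (p + (q0 * r0 + q1 * r1) - s) x (bas a) = _
  simp only [pd, H]
  simp
  ring

lemma pd_expand2 {p q0 q1 r0 r1 : E2 → ℝ} {x : E2}
    (hp : DifferentiableAt ℝ p x) (hq0 : DifferentiableAt ℝ q0 x)
    (hq1 : DifferentiableAt ℝ q1 x) (hr0 : DifferentiableAt ℝ r0 x)
    (hr1 : DifferentiableAt ℝ r1 x) (a : Fin 2) :
    pd a (fun y => p y + (q0 y * r0 y + q1 y * r1 y)) x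
      = pd a p x + (pd a q0 x * r0 x + q0 x * pd a r0 x
          + (pd a q1 x * r1 x + q1 x * pd a r1 x)) := by
  have H := (hp.hasFDerivAt.add ((hq0.hasFDerivAt.mul hr0.hasFDerivAt).add
      (hq1.hasFDerivAt.mul hr1.hasFDerivAt))).fderiv
  change fderiv ℝ (p + (q0 * r0 + q1 * r1)) x (bas a) = _
  simp only [pd, H]
  simp
  ring

end Aux

set_option maxHeartbeats 1600000 in
/-- the curvature of the connection `D_a(X,ρ) = (∇_aX^b − δ_a{}^bρ, ∂_aρ + R_{ab}X^b)`
is `(D_aD_b − D_bD_a)(X,ρ) = (0, Y_{abc}X^c)`. -/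
theorem stmt_5 (U : Set E2) (hUo : IsOpen U) (hUne : U.Nonempty)
    (Γ : E2 → (E2 →ₗ[ℝ] E2 →ₗ[ℝ] E2))
    (hΓs : ∀ a b c : Fin 2, ContDiffOn ℝ (⊤ : ℕ∞) (chr Γ a b c) U)
    (hsym : ∀ x ∈ U, ∀ u v : E2, Γ x u v = Γ x v u)
    (hRsym : ∀ x ∈ U, ∀ a b : Fin 2, ricciC (chr Γ) a b x = ricciC (chr Γ) b a x)
    (X : E2 → E2) (ρ : E2 → ℝ)
    (hX : ∀ c : Fin 2, ContDiffOn ℝ (⊤ : ℕ∞) (fun x => X x c) U)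
    (hρ : ContDiffOn ℝ (⊤ : ℕ∞) ρ U) :
    ∀ x ∈ U, ∀ a b : Fin 2,
      (∀ c : Fin 2, DDvec (chr Γ) X ρ a b c x - DDvec (chr Γ) X ρ b a c x = 0) ∧
      DDsc (chr Γ) X ρ a b x - DDsc (chr Γ) X ρ b a x
        = ∑ c, YC (chr Γ) a b c x * X x c := by
  intro x hx a b
  have hGd : ∀ a b c : Fin 2, DifferentiableAt ℝ (chr Γ a b c) x :=
    fun a b c => ContDiffOn.diffAt hUo hx (hΓs a b c)
  have hXd : ∀ c : Fin 2, DifferentiableAt ℝ (fun y => X y c) x :=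
    fun c => ContDiffOn.diffAt hUo hx (hX c)
  have hρd : DifferentiableAt ℝ ρ x := ContDiffOn.diffAt hUo hx hρ
  have hpdXd : ∀ b c : Fin 2, DifferentiableAt ℝ (pd b (fun y => X y c)) x :=
    fun b c => ContDiffOn.diffAt hUo hx (contDiffOn_pd hUo (hX c) b)
  have hpdρd : ∀ b : Fin 2, DifferentiableAt ℝ (pd b ρ) x :=
    fun b => ContDiffOn.diffAt hUo hx (contDiffOn_pd hUo hρ b)
  have hRicS : ∀ a d : Fin 2, ContDiffOn ℝ (⊤ : ℕ∞) (ricciC (chr Γ) a d) U := by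
    intro a d
    unfold ricciC
    exact ((((ContDiffOn.sum fun c _ => contDiffOn_pd hUo (hΓs a d c) c).sub
      (ContDiffOn.sum fun c _ => contDiffOn_pd hUo (hΓs c d c) a)).add
      (ContDiffOn.sum fun b _ => ContDiffOn.sum fun c _ => (hΓs c b c).mul (hΓs a d b))).sub
      (ContDiffOn.sum fun b _ => ContDiffOn.sum fun c _ => (hΓs a b c).mul (hΓs c d b)))
  have hRicD : ∀ a d : Fin 2, DifferentiableAt ℝ (ricciC (chr Γ) a d) x :=
    fun a d => ContDiffOn.diffAt hUo hx (hRicS a d)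
  have hGsym : ∀ a b c : Fin 2, chr Γ a b c x = chr Γ b a c x := by
    intro a b c
    simp [chr, hsym x hx]
  have hpdif : ∀ (a b c : Fin 2),
      pd a (fun y => if b = c then ρ y else 0) x = if b = c then pd a ρ x else 0 := by
    intro a b c
    by_cases h : b = c
    · simp only [h, if_true]
    · simp only [h, if_false, pd, fderiv_const]
      simp [pd]
  have hifd : ∀ (b c : Fin 2), DifferentiableAt ℝ (fun y => if b = c then ρ y else 0) x := by
    intro b c
    by_cases h : b = c
    · simpa [h] using hρd
    · simp [h]
  have L1 : ∀ a b c : Fin 2,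
      pd a (fun y => Dvec (chr Γ) X ρ b c y) x
        = pd a (pd b (fun y => X y c)) x
          + (pd a (chr Γ b 0 c) x * X x 0 + chr Γ b 0 c x * pd a (fun y => X y 0) x
            + (pd a (chr Γ b 1 c) x * X x 1 + chr Γ b 1 c x * pd a (fun y => X y 1) x))
          - (if b = c then pd a ρ x else 0) := by
    intro a b c
    have hfe : (fun y => Dvec (chr Γ) X ρ b c y)
        = fun y => pd b (fun z => X z c) y + (chr Γ b 0 c y * X y 0 + chr Γ b 1 c y * X y 1)
            - (if b = c then ρ y else 0) := by
      funext y
      simp [Dvec, covV, Fin.sum_univ_two]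
    rw [hfe, pd_expand1 (hpdXd b c) (hGd b 0 c) (hGd b 1 c) (hXd 0) (hXd 1) (hifd b c) a,
      hpdif a b c]
  have L2 : ∀ a b : Fin 2,
      pd a (fun y => Dsc (chr Γ) X ρ b y) x
        = pd a (pd b ρ) x
          + (pd a (ricciC (chr Γ) b 0) x * X x 0 + ricciC (chr Γ) b 0 x * pd a (fun y => X y 0) x
            + (pd a (ricciC (chr Γ) b 1) x * X x 1
              + ricciC (chr Γ) b 1 x * pd a (fun y => X y 1) x)) := by
    intro a b
    have hfe : (fun y => Dsc (chr Γ) X ρ b y)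
        = fun y => pd b ρ y + (ricciC (chr Γ) b 0 y * X y 0 + ricciC (chr Γ) b 1 y * X y 1) := by
      funext y
      simp [Dsc, Fin.sum_univ_two]
    rw [hfe, pd_expand2 (hpdρd b) (hRicD b 0) (hRicD b 1) (hXd 0) (hXd 1) a]
  have fin2 : ∀ i : Fin 2, i = 0 ∨ i = 1 := by omega
  constructor
  · intro c
    show DDvec (chr Γ) X ρ a b c x - DDvec (chr Γ) X ρ b a c x = 0
    unfold DDvec
    rw [L1 a b c, L1 b a c, pd_comm hUo hx (hX c) a b]
    simp only [Dvec, covV, Dsc, ricciC, Fin.sum_univ_two]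
    rcases fin2 a with rfl | rfl <;> rcases fin2 b with rfl | rfl <;>
      rcases fin2 c with rfl | rfl <;>
      simp only [Fin.isValue, Fin.reduceEq, reduceIte] <;>
      simp only [hGsym 1 0 0, hGsym 1 0 1] <;> ring
  · show DDsc (chr Γ) X ρ a b x - DDsc (chr Γ) X ρ b a x = _
    unfold DDsc
    rw [L2 a b, L2 b a, pd_comm hUo hx hρ a b]
    simp only [Dvec, covV, Dsc, YC, covRicciC, Fin.sum_univ_two]
    rcases fin2 a with rfl | rfl <;> rcases fin2 b with rfl | rfl <;>
      simp only [Fin.isValue, Fin.reduceEq, reduceIte] <;>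
      simp only [hGsym 1 0 0, hGsym 1 0 1, hRsym x hx 1 0] <;> ring
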